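/- Let P be a pseudotree (a connected graph with at most one cycle) and Z a set of vertices such that α(P) > α(P - Z). Then there exist three (possibly non-distinct) vertices u, v, w ∈ Z ∩ V(P) such that α(P) > α(P - {u, v, w}). -/

import Mathlib

open SimpleGraph

/-- The maximum size of an independent set of `G` contained in the vertex set `A`
(i.e. the independence number of the induced subgraph `G[A]`). -/
noncomputable def alphaOn {V : Type*} [Fintype V] (G : SimpleGraph V) (A : Set V) : ℕ :=
  sSup {n | ∃ s : Finset V, ↑s ⊆ A ∧ (↑s : Set V).Pairwise (fun a b => ¬ G.Adj a b) ∧ s.card = n}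

/-- The open neighborhood of a set of vertices. -/
def nbhd {V : Type*} (G : SimpleGraph V) (S : Set V) : Set V :=
  {v | v ∉ S ∧ ∃ u ∈ S, G.Adj u v}

/-- `v` is α-critical in the induced subgraph `G[A]`. -/
def critOn {V : Type*} [Fintype V] (G : SimpleGraph V) (A : Set V) (v : V) : Prop :=
  alphaOn G A = 1 + alphaOn G (A \ {v})

/-- For a tree `T` rooted at `r`, the vertex set of the subtree rooted at `a`:
those vertices reachable from `a` without passing through `r`. -/
def descend {V : Type*} (T : SimpleGraph V) (r a : V) : Set V :=
  {v | ∃ p : T.Walk a v, r ∉ p.support}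

/-- The connected component of `v₀` in `G - X`: vertices reachable from `v₀` avoiding `X`. -/
def avoidComp {V : Type*} (G : SimpleGraph V) (X : Set V) (v₀ : V) : Set V :=
  {v | ∃ p : G.Walk v₀ v, ∀ x ∈ p.support, x ∉ X}

/-!
Choose `W ⊆ Z` minimal with `α(P - W) < α(P)`. By minimality every `z ∈ W` has a maximum
independent set `S z` meeting `W` only in `z`. For `z ≠ z'` in `W`, the vertex `z'` lies in the
component of `z` in `P[S z ∆ S z']`: otherwise exchanging `S z` and `S z'` on that component gives a
maximum independent set missing `W`. A walk from `z` to `z'` inside `S z ∆ S z'` alternates between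
the two sets, so it has odd length.

If `P` is bipartite, `z` and `z'` therefore get different colours, so `|W| ≤ 2`. Otherwise the
unique cycle of `P` is odd, and deleting any of its edges `xy` leaves a tree whose 2-colouring gives
`x` and `y` the same colour; an odd walk between two equally coloured vertices must then use `xy`,
so `x ∈ S z ∆ S z'`. Among four vertices of `W` no three can share a colour (`x` cannot lie in all
three pairwise symmetric differences), so they form two equally coloured pairs and `x` lies in
exactly two of the four sets `S z`. This holds for every vertex of the cycle, whereas an independent
set contains fewer than half of the vertices of an odd cycle.
-/

open scoped symmDiff

theorem Set.exists_subset_triple_of_ncard_le_three {α : Type*} {s : Set α} (hs : s.Finite)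
    (hne : s.Nonempty) (h3 : s.ncard ≤ 3) : ∃ u ∈ s, ∃ v ∈ s, ∃ w ∈ s, s ⊆ {u, v, w} := by
  have hpos := (Set.ncard_pos hs).2 hne
  obtain h | h | h : s.ncard = 1 ∨ s.ncard = 2 ∨ s.ncard = 3 := by omega
  · obtain ⟨a, rfl⟩ := Set.ncard_eq_one.1 h
    exact ⟨a, rfl, a, rfl, a, rfl, by simp⟩
  · obtain ⟨a, b, -, rfl⟩ := Set.ncard_eq_two.1 h
    exact ⟨a, by simp, b, by simp, b, by simp, by simp⟩
  · obtain ⟨a, b, c, -, -, -, rfl⟩ := Set.ncard_eq_three.1 h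
    exact ⟨a, by simp, b, by simp, c, by simp, subset_rfl⟩

theorem sum_ite_eq_two_of_fin_four {c b : Fin 4 → Bool}
    (h : ∀ i j, i ≠ j → c i = c j → b i ≠ b j) : ∑ i, (if b i then 1 else 0) = 2 := by
  have h01 := h 0 1 (by decide)
  have h02 := h 0 2 (by decide)
  have h03 := h 0 3 (by decide)
  have h12 := h 1 2 (by decide)
  have h13 := h 1 3 (by decide)
  have h23 := h 2 3 (by decide)
  rw [Fin.sum_univ_four]
  clear h
  revert h01 h02 h03 h12 h13 h23
  generalize c 0 = c₀, c 1 = c₁, c 2 = c₂, c 3 = c₃, b 0 = b₀, b 1 = b₁, b 2 = b₂, b 3 = b₃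
  revert c₀ c₁ c₂ c₃ b₀ b₁ b₂ b₃
  decide

namespace SimpleGraph

variable {V : Type*} {G : SimpleGraph V}

section AlphaOn

variable [Fintype V] {A B : Set V}

theorem le_alphaOn {s : Finset V} (hsA : ↑s ⊆ A) (hs : G.IsIndepSet ↑s) :
    s.card ≤ alphaOn G A :=
  le_csSup ⟨Fintype.card V, by rintro n ⟨t, -, -, rfl⟩; exact t.card_le_univ⟩ ⟨s, hsA, hs, rfl⟩

theorem exists_isIndepSet_card_eq_alphaOn (G : SimpleGraph V) (A : Set V) :
    ∃ s : Finset V, ↑s ⊆ A ∧ G.IsIndepSet ↑s ∧ s.card = alphaOn G A := by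
  refine Nat.sSup_mem (s := {n | ∃ s : Finset V, ↑s ⊆ A ∧ G.IsIndepSet ↑s ∧ s.card = n})
    ⟨0, ∅, by simp⟩ ⟨Fintype.card V, ?_⟩
  rintro n ⟨t, -, -, rfl⟩
  exact t.card_le_univ

theorem alphaOn_mono (h : A ⊆ B) : alphaOn G A ≤ alphaOn G B := by
  obtain ⟨s, hsA, hs, hcard⟩ := exists_isIndepSet_card_eq_alphaOn G A
  exact hcard ▸ le_alphaOn (hsA.trans h) hs

theorem exists_mem_of_alphaOn_compl_lt {W : Set V} (hW : alphaOn G Wᶜ < alphaOn G .univ)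
    {s : Finset V} (hs : G.IsIndepSet ↑s) (hcard : s.card = alphaOn G .univ) : ∃ v ∈ s, v ∈ W := by
  by_contra! h
  exact (le_alphaOn (A := Wᶜ) (fun v hv => h v hv) hs).not_gt (hcard ▸ hW)

end AlphaOn

theorem mem_avoidComp_self {X : Set V} {v₀ : V} (h : v₀ ∉ X) : v₀ ∈ avoidComp G X v₀ :=
  ⟨.nil, by simpa using h⟩

theorem mem_avoidComp_of_adj {X : Set V} {v₀ v u : V} (hv : v ∈ avoidComp G X v₀)
    (hadj : G.Adj v u) (hu : u ∉ X) : u ∈ avoidComp G X v₀ := by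
  obtain ⟨p, hp⟩ := hv
  refine ⟨p.concat hadj, fun x hx => ?_⟩
  rw [Walk.support_concat, List.mem_append, List.mem_singleton] at hx
  exact hx.elim (hp x) (· ▸ hu)

section Swap

variable [DecidableEq V] {A B D : Finset V}

theorem IsIndepSet.sdiff_union_inter (hA : G.IsIndepSet ↑A) (hB : G.IsIndepSet ↑B)
    (hD : ∀ v ∈ D, ∀ u, G.Adj v u → u ∈ A ∆ B → u ∈ D) : G.IsIndepSet ↑(A \ D ∪ B ∩ D) := by
  have hcross : ∀ u ∈ A \ D, ∀ v ∈ B ∩ D, ¬ G.Adj u v := by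
    intro u hu v hv huv
    simp only [Finset.mem_sdiff, Finset.mem_inter] at hu hv
    by_cases huB : u ∈ B
    · exact hB huB hv.1 huv.ne huv
    · exact hu.2 (hD v hv.2 u huv.symm (Finset.mem_symmDiff.2 (.inl ⟨hu.1, huB⟩)))
  intro u hu v hv huv hadj
  simp only [Finset.coe_union, Set.mem_union, Finset.mem_coe] at hu hv
  rcases hu with hu | hu <;> rcases hv with hv | hv
  · exact hA (Finset.mem_sdiff.1 hu).1 (Finset.mem_sdiff.1 hv).1 huv hadj
  · exact hcross u hu v hv hadj
  · exact hcross v hv u hu hadj.symm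
  · exact hB (Finset.mem_inter.1 hu).1 (Finset.mem_inter.1 hv).1 huv hadj

theorem card_sdiff_union_inter_add_card_sdiff_union_inter (A B D : Finset V) :
    (A \ D ∪ B ∩ D).card + (B \ D ∪ A ∩ D).card = A.card + B.card := by
  have hdisj : ∀ X Y : Finset V, Disjoint (X \ D) (Y ∩ D) := fun X Y =>
    Finset.disjoint_left.2 fun v hX hY => (Finset.mem_sdiff.1 hX).2 (Finset.mem_inter.1 hY).2
  rw [Finset.card_union_of_disjoint (hdisj A B), Finset.card_union_of_disjoint (hdisj B A),
    ← Finset.card_sdiff_add_card_inter A D, ← Finset.card_sdiff_add_card_inter B D]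
  ring

theorem card_sdiff_union_inter_eq_alphaOn [Fintype V] (hA : G.IsIndepSet ↑A)
    (hB : G.IsIndepSet ↑B) (hAcard : A.card = alphaOn G .univ) (hBcard : B.card = alphaOn G .univ)
    (hD : ∀ v ∈ D, ∀ u, G.Adj v u → u ∈ A ∆ B → u ∈ D) :
    (A \ D ∪ B ∩ D).card = alphaOn G .univ := by
  have hD' : ∀ v ∈ D, ∀ u, G.Adj v u → u ∈ B ∆ A → u ∈ D := symmDiff_comm A B ▸ hD
  have h₁ := le_alphaOn (Set.subset_univ _) (hA.sdiff_union_inter hB hD)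
  have h₂ := le_alphaOn (Set.subset_univ _) (hB.sdiff_union_inter hA hD')
  have := card_sdiff_union_inter_add_card_sdiff_union_inter A B D
  omega

end Swap

section Parity

theorem Walk.even_length_add_countP_darts_iff (c : V → Bool) {u v : V} (w : G.Walk u v) :
    Even (w.length + w.darts.countP fun d => c d.fst = c d.snd) ↔ c u = c v := by
  induction w with
  | nil => simp
  | @cons a b _ hab p ih =>
    simp only [Walk.length_cons, Walk.darts_cons, List.countP_cons]
    by_cases hcab : c a = c b
    · simp only [hcab, decide_true, if_true, ← ih]
      rw [show ∀ m n : ℕ, m + 1 + (n + 1) = m + n + 2 by omega, Nat.even_add,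
        iff_true_intro even_two, iff_true]
    · simp only [hcab, decide_false, if_false, Bool.false_eq_true, add_zero]
      rw [add_right_comm, Nat.even_add_one, ih]
      revert hcab
      cases c a <;> cases c b <;> cases c _ <;> decide

theorem Walk.even_length_iff_of_forall_darts (c : V → Bool) {u v : V} (w : G.Walk u v)
    (hc : ∀ d ∈ w.darts, c d.fst ≠ c d.snd) : Even w.length ↔ c u = c v := by
  rw [← w.even_length_add_countP_darts_iff c, List.countP_eq_zero.2 (by simpa using hc), add_zero]

theorem Walk.even_length_add_count_iff [DecidableEq V] (c : V → Bool) {x y : V} (hxy : c x = c y)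
    (hc : ∀ a b, G.Adj a b → s(a, b) ≠ s(x, y) → c a ≠ c b) {u v : V} (w : G.Walk u v) :
    Even (w.length + w.edges.count s(x, y)) ↔ c u = c v := by
  rw [← w.even_length_add_countP_darts_iff c, Walk.edges, List.count, List.countP_map]
  refine iff_of_eq (congrArg (fun n => Even (w.length + n)) (List.countP_congr ?_))
  refine fun d hd => ?_
  simp only [Function.comp_apply, beq_iff_eq, decide_eq_true_eq, Dart.edge]
  constructor
  · intro h
    rcases Sym2.eq_iff.1 h with ⟨h₁, h₂⟩ | ⟨h₁, h₂⟩ <;> simp [h₁, h₂, hxy]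
  · intro h
    by_contra hne
    exact hc _ _ d.adj hne h

theorem IsIndepSet.two_mul_sum_getVert_mem_lt [DecidableEq V] {S : Finset V}
    (hS : G.IsIndepSet ↑S) {u : V} (p : G.Walk u u) (hodd : Odd p.length) :
    2 * ∑ k ∈ Finset.range p.length, (if p.getVert k ∈ S then 1 else 0) < p.length := by
  set f : ℕ → ℕ := fun k => if p.getVert k ∈ S then 1 else 0
  have hstep : ∀ k ∈ Finset.range p.length, f k + f (k + 1) ≤ 1 := by
    intro k hk
    have hadj := p.adj_getVert_succ (Finset.mem_range.1 hk)
    by_cases h₁ : p.getVert k ∈ S <;> by_cases h₂ : p.getVert (k + 1) ∈ S <;> simp [f, h₁, h₂]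
    exact hS h₁ h₂ hadj.ne hadj
  have hshift : ∑ k ∈ Finset.range p.length, f (k + 1) = (Finset.range p.length).sum f := by
    have := (Finset.sum_range_succ' f p.length).symm.trans (Finset.sum_range_succ f p.length)
    simp only [f, Walk.getVert_zero, Walk.getVert_length] at this ⊢
    omega
  have hsum :
      (Finset.range p.length).sum f + ∑ k ∈ Finset.range p.length, f (k + 1) ≤ p.length := by
    rw [← Finset.sum_add_distrib]
    exact (Finset.sum_le_sum hstep).trans_eq (by simp)
  rw [hshift] at hsum
  obtain ⟨j, hj⟩ := hodd
  omega

end Parity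

section Pseudotree

theorem isTree_deleteEdges_of_mem_edges_isCycle [Fintype V] (hconn : G.Connected)
    (hedge : G.edgeSet.ncard ≤ Fintype.card V) {u : V} {p : G.Walk u u} (hp : p.IsCycle)
    {e : Sym2 V} (he : e ∈ p.edges) : (G.deleteEdges {e}).IsTree := by
  induction e using Sym2.ind with | h x y =>
  have hT := hconn.connected_delete_edge_of_not_isBridge fun hbr =>
    hbr.notMem_edges_of_isCycle hp he
  have hcard : (G.deleteEdges {s(x, y)}).edgeSet.ncard = G.edgeSet.ncard - 1 := by
    rw [edgeSet_deleteEdges]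
    exact Set.ncard_sdiff_singleton_of_mem (p.edges_subset_edgeSet he)
  have hpos : 0 < G.edgeSet.ncard :=
    (Set.ncard_pos (Set.toFinite _)).2 ⟨_, p.edges_subset_edgeSet he⟩
  have hlb := hT.card_vert_le_card_edgeSet_add_one
  rw [isTree_iff_connected_and_card]
  refine ⟨hT, ?_⟩
  rw [Nat.card_coe_set_eq, Nat.card_eq_fintype_card] at hlb ⊢
  omega

theorem exists_eq_of_colorable_deleteEdges (hG : ¬ G.Colorable 2) {x y : V}
    (h : (G.deleteEdges {s(x, y)}).Colorable 2) :
    ∃ c : V → Bool, c x = c y ∧ ∀ a b, G.Adj a b → s(a, b) ≠ s(x, y) → c a ≠ c b := by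
  let c := recolorOfEquiv _ finTwoEquiv h.some
  have hc : ∀ a b, G.Adj a b → s(a, b) ≠ s(x, y) → c a ≠ c b := fun a b hab hne =>
    c.valid (deleteEdges_adj.2 ⟨hab, by simpa using hne⟩)
  refine ⟨c, by_contra fun hxy => hG ?_, hc⟩
  refine (Coloring.mk c fun {a b} hab => ?_).colorable
  by_cases he : s(a, b) = s(x, y)
  · rcases Sym2.eq_iff.1 he with ⟨rfl, rfl⟩ | ⟨rfl, rfl⟩
    exacts [hxy, Ne.symm hxy]
  · exact hc a b hab he

theorem Walk.IsCycle.odd_length_of_colorable_deleteEdges [DecidableEq V] (hG : ¬ G.Colorable 2)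
    {u : V} {p : G.Walk u u} (hp : p.IsCycle) {x y : V} (he : s(x, y) ∈ p.edges)
    (h : (G.deleteEdges {s(x, y)}).Colorable 2) : Odd p.length := by
  obtain ⟨c, hxy, hc⟩ := exists_eq_of_colorable_deleteEdges hG h
  have hpar := (p.even_length_add_count_iff c hxy hc).2 rfl
  rwa [List.count_eq_one_of_mem hp.edges_nodup he, Nat.even_add_one, Nat.not_even_iff_odd] at hpar

end Pseudotree

section PrivateMaxIndepSet

variable [Fintype V]

structure IsPrivateMaxIndepSet (G : SimpleGraph V) (W : Set V) (z : V) (S : Finset V) : Prop where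
  isIndepSet : G.IsIndepSet ↑S
  card_eq : S.card = alphaOn G .univ
  mem : z ∈ S
  eq_of_mem : ∀ v ∈ S, v ∈ W → v = z

theorem exists_isPrivateMaxIndepSet {W : Set V}
    (hW : Minimal (fun W => alphaOn G Wᶜ < alphaOn G .univ) W) {z : V} (hz : z ∈ W) :
    ∃ S, IsPrivateMaxIndepSet G W z S := by
  have hle : alphaOn G .univ ≤ alphaOn G (W \ {z})ᶜ :=
    not_lt.1 (hW.not_prop_of_lt (Set.sdiff_singleton_ssubset.2 hz))
  obtain ⟨S, hSW, hS, hcard⟩ := exists_isIndepSet_card_eq_alphaOn G (W \ {z})ᶜ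
  have hcard' : S.card = alphaOn G .univ :=
    le_antisymm (le_alphaOn (Set.subset_univ _) hS) (hcard ▸ hle)
  have heq : ∀ v ∈ S, v ∈ W → v = z := fun v hv hvW =>
    by_contra fun hvz => hSW hv ⟨hvW, hvz⟩
  obtain ⟨v, hvS, hvW⟩ := exists_mem_of_alphaOn_compl_lt hW.prop hS hcard'
  exact ⟨S, hS, hcard', heq v hvS hvW ▸ hvS, heq⟩

namespace IsPrivateMaxIndepSet

variable {W : Set V} {z z' : V} {S S' : Finset V}

theorem notMem (hS : IsPrivateMaxIndepSet G W z S) (hz' : z' ∈ W) (hne : z' ≠ z) : z' ∉ S :=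
  fun h => hne (hS.eq_of_mem z' h hz')

variable [DecidableEq V]

/-- Otherwise exchanging `S` and `S'` on the component of `z` in `G[S ∆ S']` would give a maximum
independent set avoiding `W`. -/
theorem exists_walk_symmDiff (hW : alphaOn G Wᶜ < alphaOn G .univ)
    (hS : IsPrivateMaxIndepSet G W z S) (hS' : IsPrivateMaxIndepSet G W z' S')
    (hz : z ∈ W) (hne : z ≠ z') : ∃ w : G.Walk z z', ∀ x ∈ w.support, x ∈ S ∆ S' := by
  classical
  set X : Set V := (↑(S ∆ S'))ᶜ
  have hzD : z ∈ avoidComp G X z :=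
    mem_avoidComp_self (not_not_intro (Finset.mem_symmDiff.2 (.inl ⟨hS.mem, hS'.notMem hz hne⟩)))
  have hD : ∀ v ∈ (avoidComp G X z).toFinset, ∀ u, G.Adj v u → u ∈ S ∆ S' →
      u ∈ (avoidComp G X z).toFinset := fun v hv u hadj hu => by
    simpa using mem_avoidComp_of_adj (Set.mem_toFinset.1 hv) hadj (not_not_intro hu)
  by_contra hwalk
  have hz'D : z' ∉ avoidComp G X z :=
    fun ⟨w, hw⟩ => hwalk ⟨w, fun x hx => not_not.1 (hw x hx)⟩
  have hcard := card_sdiff_union_inter_eq_alphaOn hS.isIndepSet hS'.isIndepSet hS.card_eq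
    hS'.card_eq hD
  refine (le_alphaOn (A := Wᶜ) ?_ (hS.isIndepSet.sdiff_union_inter hS'.isIndepSet hD)).not_gt
    (hcard ▸ hW)
  intro v hv hvW
  simp only [Finset.coe_union, Finset.coe_sdiff, Finset.coe_inter, Set.coe_toFinset,
    Set.mem_union, Set.mem_sdiff, Set.mem_inter_iff, Finset.mem_coe] at hv
  rcases hv with ⟨hvS, hvD⟩ | ⟨hvS', hvD⟩
  · exact hvD (hS.eq_of_mem v hvS hvW ▸ hzD)
  · exact hz'D (hS'.eq_of_mem v hvS' hvW ▸ hvD)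

theorem exists_odd_walk_symmDiff (hW : alphaOn G Wᶜ < alphaOn G .univ)
    (hS : IsPrivateMaxIndepSet G W z S) (hS' : IsPrivateMaxIndepSet G W z' S')
    (hz : z ∈ W) (hne : z ≠ z') :
    ∃ w : G.Walk z z', (∀ x ∈ w.support, x ∈ S ∆ S') ∧ Odd w.length := by
  obtain ⟨w, hw⟩ := hS.exists_walk_symmDiff hW hS' hz hne
  refine ⟨w, hw, Nat.not_even_iff_odd.1 fun heven => ?_⟩
  have hdarts : ∀ d ∈ w.darts, decide (d.fst ∈ S') ≠ decide (d.snd ∈ S') := by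
    intro d hd hsame
    have h₁ := Finset.mem_symmDiff.1 (hw _ (w.dart_fst_mem_support_of_mem_darts hd))
    have h₂ := Finset.mem_symmDiff.1 (hw _ (w.dart_snd_mem_support_of_mem_darts hd))
    simp only [decide_eq_decide] at hsame
    rcases h₁ with ⟨h₁S, h₁S'⟩ | ⟨h₁S', -⟩
    · have h₂S : d.snd ∈ S := h₂.elim And.left fun h => absurd (hsame.2 h.1) h₁S'
      exact hS.isIndepSet h₁S h₂S d.adj.ne d.adj
    · exact hS'.isIndepSet h₁S' (hsame.1 h₁S') d.adj.ne d.adj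
  have := (w.even_length_iff_of_forall_darts (fun v => decide (v ∈ S')) hdarts).1 heven
  simp [hS'.mem, hS'.notMem hz hne] at this

theorem coloring_ne (hW : alphaOn G Wᶜ < alphaOn G .univ) (hS : IsPrivateMaxIndepSet G W z S)
    (hS' : IsPrivateMaxIndepSet G W z' S') (hz : z ∈ W) (hne : z ≠ z') (c : G.Coloring Bool) :
    c z ≠ c z' := by
  obtain ⟨w, -, hodd⟩ := hS.exists_odd_walk_symmDiff hW hS' hz hne
  have := (c.odd_length_iff_not_congr w).1 hodd
  cases h : c z <;> simp_all

theorem mem_symmDiff_of_eq (hW : alphaOn G Wᶜ < alphaOn G .univ)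
    (hS : IsPrivateMaxIndepSet G W z S) (hS' : IsPrivateMaxIndepSet G W z' S')
    (hz : z ∈ W) (hne : z ≠ z') {c : V → Bool} {x y : V} (hxy : c x = c y)
    (hc : ∀ a b, G.Adj a b → s(a, b) ≠ s(x, y) → c a ≠ c b) (hzz' : c z = c z') :
    x ∈ S ∆ S' := by
  obtain ⟨w, hw, hodd⟩ := hS.exists_odd_walk_symmDiff hW hS' hz hne
  have hcount := (w.even_length_add_count_iff c hxy hc).2 hzz'
  have hmem : s(x, y) ∈ w.edges := by
    by_contra h
    rw [List.count_eq_zero_of_not_mem h, add_zero] at hcount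
    exact Nat.not_even_iff_odd.2 hodd hcount
  exact hw x (w.fst_mem_support_of_mem_edges hmem)

end IsPrivateMaxIndepSet

variable [DecidableEq V] {W : Set V}

theorem false_of_isCycle_of_forall_isPrivateMaxIndepSet (hG : ¬ G.Colorable 2) {u : V}
    {p : G.Walk u u} (hp : p.IsCycle) (hcol : ∀ e ∈ p.edges, (G.deleteEdges {e}).Colorable 2)
    (hW : alphaOn G Wᶜ < alphaOn G .univ) {z : Fin 4 → V} (hz : Function.Injective z)
    (hzW : ∀ i, z i ∈ W) {S : Fin 4 → Finset V} (hS : ∀ i, IsPrivateMaxIndepSet G W (z i) (S i)) :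
    False := by
  have hedge : ∀ k < p.length, s(p.getVert k, p.getVert (k + 1)) ∈ p.edges :=
    fun k hk => p.mk_mem_edges_iff_exists.2 ⟨k, hk, rfl⟩
  have hpos : 0 < p.length := hp.three_le_length.trans_lt' (by norm_num)
  have hodd : Odd p.length :=
    hp.odd_length_of_colorable_deleteEdges hG (hedge 0 hpos) (hcol _ (hedge 0 hpos))
  have htwo : ∀ k ∈ Finset.range p.length, ∑ i, (if p.getVert k ∈ S i then 1 else 0) = 2 := by
    intro k hk
    obtain ⟨c, hxy, hc⟩ :=
      exists_eq_of_colorable_deleteEdges hG (hcol _ (hedge k (Finset.mem_range.1 hk)))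
    have := sum_ite_eq_two_of_fin_four (c := fun i => c (z i))
      (b := fun i => decide (p.getVert k ∈ S i)) fun i j hij hcij => by
        have := (hS i).mem_symmDiff_of_eq hW (hS j) (hzW i) (hz.ne hij) hxy hc hcij
        simp only [Finset.mem_symmDiff] at this
        simp only [ne_eq, decide_eq_decide]
        tauto
    simpa using this
  have hlt : ∀ i ∈ Finset.univ, 2 * ∑ k ∈ Finset.range p.length,
      (if p.getVert k ∈ S i then 1 else 0) < p.length :=
    fun i _ => (hS i).isIndepSet.two_mul_sum_getVert_mem_lt p hodd
  have := Finset.sum_lt_sum_of_nonempty Finset.univ_nonempty hlt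
  rw [← Finset.mul_sum, Finset.sum_comm, Finset.sum_congr rfl htwo] at this
  simp only [Finset.sum_const, Finset.card_range, smul_eq_mul, Finset.card_univ,
    Fintype.card_fin] at this
  omega

theorem ncard_le_three_of_forall_isPrivateMaxIndepSet (hconn : G.Connected)
    (hedge : G.edgeSet.ncard ≤ Fintype.card V) (hW : alphaOn G Wᶜ < alphaOn G .univ)
    (hpriv : ∀ z ∈ W, ∃ S, IsPrivateMaxIndepSet G W z S) : W.ncard ≤ 3 := by
  classical
  by_contra! h
  obtain ⟨f⟩ := Function.Embedding.nonempty_of_card_le (α := Fin 4) (β := W) (by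
    rw [Fintype.card_fin, ← Nat.card_eq_fintype_card, Nat.card_coe_set_eq]; omega)
  set z : Fin 4 → V := fun i => f i
  have hz : Function.Injective z := fun i j h => f.injective (Subtype.ext h)
  have hzW : ∀ i, z i ∈ W := fun i => (f i).2
  choose S hS using fun i => hpriv (z i) (hzW i)
  by_cases hG : G.Colorable 2
  · let c := recolorOfEquiv _ finTwoEquiv hG.some
    obtain ⟨i, j, hij, hcij⟩ := Fintype.exists_ne_map_eq_of_card_lt (fun i => c (z i)) (by simp)
    exact (hS i).coloring_ne hW (hS j) (hzW i) (hz.ne hij) c hcij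
  · obtain ⟨u, p, hp⟩ : ∃ u, ∃ p : G.Walk u u, p.IsCycle := by
      by_contra! hacyc
      exact hG (IsAcyclic.colorable_two fun u p => hacyc u p)
    exact false_of_isCycle_of_forall_isPrivateMaxIndepSet hG hp
      (fun e he => (isTree_deleteEdges_of_mem_edges_isCycle hconn hedge hp he).colorable_two)
      hW hz hzW hS

end PrivateMaxIndepSet

end SimpleGraph

theorem stmt6 {V : Type*} [Fintype V] (P : SimpleGraph V)
    (hconn : P.Connected) (hedge : P.edgeSet.ncard ≤ Fintype.card V) (Z : Set V)
    (h : alphaOn P Zᶜ < alphaOn P Set.univ) :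
    ∃ u ∈ Z, ∃ v ∈ Z, ∃ w ∈ Z,
      alphaOn P ({u, v, w} : Set V)ᶜ < alphaOn P Set.univ := by
  classical
  obtain ⟨W, hWZ, hW⟩ :=
    exists_minimal_le_of_wellFoundedLT (fun W : Set V => alphaOn P Wᶜ < alphaOn P .univ) Z h
  have hW3 : W.ncard ≤ 3 := ncard_le_three_of_forall_isPrivateMaxIndepSet hconn hedge hW.prop
    fun z hz => exists_isPrivateMaxIndepSet hW hz
  have hne : W.Nonempty := Set.nonempty_iff_ne_empty.2 fun h₀ => by simpa [h₀] using hW.prop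
  obtain ⟨u, hu, v, hv, w, hw, hWuvw⟩ :=
    Set.exists_subset_triple_of_ncard_le_three (Set.toFinite W) hne hW3
  exact ⟨u, hWZ hu, v, hWZ hv, w, hWZ hw,
    (alphaOn_mono (Set.compl_subset_compl.2 hWuvw)).trans_lt hW.prop⟩
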